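/- arXiv:1708.05587 — 3 statements merged into one kernel-verified Lean document; each statement's English description precedes it below -/
import Mathlib

section
/- Let μ be supported on the whole real line (μ(U) > 0 for every nonempty open U ⊆ ℝ). Let m₁ = 1 and m₂,…,m_s be positive even integers, and let B be an open subset of ℝ × [0,∞)^{s−1} such that for every β = (β₁,…,β_s) ∈ B one has Σ_{i=1}^s β_i u^{m_i} − I(u) → −∞ as |u| → ∞. Then the map β ↦ sup_{u∈ℝ} (Σ_{i=1}^s β_i u^{m_i} − I(u)) is continuous on B. (By the identification of the limiting normalizing constant for admissible β with β₂,…,β_s ≥ 0, this says the limiting normalizing constant lim_{n→∞} ψ_n of the corresponding GERGM is continuous in β on B.) -/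
open MeasureTheory Filter Set
open scoped ENNReal Topology

noncomputable section

/-- The rate function `I(u) = (1/2) h(u)`, where
`h(u) = sup_θ (θ u − ln M(θ))` is the Cramér transform of `μ`
(a genuine real number when `μ` has full support and finite mgf). -/
def IfunR (μ : Measure ℝ) (u : ℝ) : ℝ :=
  (1 / 2) * ⨆ θ : ℝ, (θ * u - Real.log (∫ x, Real.exp (θ * x) ∂μ))

/-- The Cramér transform is nonnegative (it dominates its value at `θ = 0`,
which is `− ln M(0) = − ln 1 = 0`). -/
lemma IfunR_nonneg (μ : Measure ℝ) [IsProbabilityMeasure μ] (u : ℝ) :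
    0 ≤ IfunR μ u := by
  have h : 0 ≤ ⨆ θ : ℝ, (θ * u - Real.log (∫ x, Real.exp (θ * x) ∂μ)) := by
    by_cases hb : BddAbove (Set.range fun θ : ℝ =>
        θ * u - Real.log (∫ x, Real.exp (θ * x) ∂μ))
    · have h0 : (0:ℝ) * u - Real.log (∫ x, Real.exp ((0:ℝ) * x) ∂μ) = 0 := by
        simp
      calc (0:ℝ) = (0:ℝ) * u - Real.log (∫ x, Real.exp ((0:ℝ) * x) ∂μ) := h0.symm
        _ ≤ _ := le_ciSup hb 0
    · rw [Real.iSup_of_not_bddAbove hb]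
  unfold IfunR
  linarith

/-- **Theorem (continuity of the limiting normalizing constant).**
For a base measure supported on the whole real line, exponents `m₁ = 1` and
`m₂,…,m_s` positive even integers, and `B` an open subset of `ℝ × [0,∞)^{s−1}` on
which `u ↦ Σ β_i u^{m_i} − I(u)` is coercive, the map
`β ↦ sup_u (Σ_i β_i u^{m_i} − I(u))` (the limiting normalizing constant of the
corresponding GERGM) is continuous on `B`. -/
theorem limiting_normalizing_constant_continuous
    (μ : Measure ℝ) [IsProbabilityMeasure μ]
    (hsupp : ∀ U : Set ℝ, IsOpen U → U.Nonempty → 0 < μ U)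
    (hmgf : ∀ θ : ℝ, Integrable (fun x => Real.exp (θ * x)) μ)
    (hmoment : ∀ θ : ℝ, Integrable (fun x => Real.exp (θ * x ^ 2)) μ)
    (s : ℕ) (hs : 0 < s) (m : Fin s → ℕ)
    (hm0 : m ⟨0, hs⟩ = 1)
    (hmeven : ∀ i, i ≠ (⟨0, hs⟩ : Fin s) → Even (m i) ∧ 0 < m i)
    (B : Set (Fin s → ℝ))
    (hBopen : ∃ U : Set (Fin s → ℝ), IsOpen U ∧
      B = U ∩ {β | ∀ i, i ≠ (⟨0, hs⟩ : Fin s) → 0 ≤ β i})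
    (hcoer : ∀ β ∈ B,
      Tendsto (fun u : ℝ => ∑ i, β i * u ^ (m i) - IfunR μ u) (cocompact ℝ) atBot) :
    ContinuousOn
      (fun β : Fin s → ℝ => ⨆ u : ℝ, (∑ i, β i * u ^ (m i) - IfunR μ u)) B := by
  classical
  set i0 : Fin s := ⟨0, hs⟩ with hi0
  have hNe : Nonempty (Fin s) := ⟨i0⟩
  set F : (Fin s → ℝ) → ℝ → ℝ :=
    fun β u => ∑ i, β i * u ^ (m i) - IfunR μ u with hF
  have hmpos : ∀ i, 0 < m i := by
    intro i
    by_cases h : i = i0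
    · rw [h, hi0, hm0]; norm_num
    · exact (hmeven i h).2
  have hFzero : ∀ β : Fin s → ℝ, F β 0 = - IfunR μ 0 := by
    intro β
    have : ∑ i, β i * (0:ℝ) ^ (m i) = 0 := by
      apply Finset.sum_eq_zero
      intro i _
      rw [zero_pow (hmpos i).ne', mul_zero]
    simp only [hF, this, zero_sub]
  set c₀ : ℝ := - IfunR μ 0 with hc₀
  obtain ⟨U, hU, hBU⟩ := hBopen
  intro β₀ hβ₀
  have hβ₀U : β₀ ∈ U := by rw [hBU] at hβ₀; exact hβ₀.1
  have hβ₀P : ∀ i, i ≠ i0 → 0 ≤ β₀ i := by rw [hBU] at hβ₀; exact hβ₀.2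
  obtain ⟨ε, hε, hball⟩ := Metric.isOpen_iff.mp hU β₀ hβ₀U
  set δ : ℝ := ε / 2 with hδdef
  have hδpos : 0 < δ := by positivity
  have hδε : δ < ε := by rw [hδdef]; linarith
  -- the two comparison points
  set βp : Fin s → ℝ := fun i => β₀ i + δ with hβp
  set βm : Fin s → ℝ := Function.update βp i0 (β₀ i0 - δ) with hβm
  have hβmne : ∀ i, i ≠ i0 → βm i = β₀ i + δ := by
    intro i hi
    rw [hβm, Function.update_apply, if_neg hi]
  have hβmi0 : βm i0 = β₀ i0 - δ := by
    rw [hβm, Function.update_self]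
  have hβpB : βp ∈ B := by
    rw [hBU]
    refine ⟨hball ?_, fun i hi => by
      have := hβ₀P i hi
      simp only [hβp]; linarith⟩
    rw [Metric.mem_ball]
    have hd : dist βp β₀ ≤ δ := by
      rw [dist_pi_le_iff hδpos.le]
      intro i
      simp [hβp, Real.dist_eq, abs_of_nonneg hδpos.le]
    linarith
  have hβmB : βm ∈ B := by
    rw [hBU]
    refine ⟨hball ?_, fun i hi => by
      have := hβ₀P i hi
      rw [hβmne i hi]; linarith⟩
    rw [Metric.mem_ball]
    have hd : dist βm β₀ ≤ δ := by
      rw [dist_pi_le_iff hδpos.le]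
      intro i
      by_cases hi : i = i0
      · rw [hi, hβmi0, Real.dist_eq]
        have heq : β₀ i0 - δ - β₀ i0 = -δ := by ring
        rw [heq, abs_neg, abs_of_nonneg hδpos.le]
      · rw [hβmne i hi, Real.dist_eq]
        have heq : β₀ i + δ - β₀ i = δ := by ring
        rw [heq, abs_of_nonneg hδpos.le]
    linarith
  -- coercivity at the comparison points gives a compact tail bound
  have htailp : ∀ᶠ u in cocompact ℝ, F βp u ≤ c₀ - 1 :=
    (hcoer βp hβpB).eventually (eventually_le_atBot (c₀ - 1))
  have htailm : ∀ᶠ u in cocompact ℝ, F βm u ≤ c₀ - 1 :=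
    (hcoer βm hβmB).eventually (eventually_le_atBot (c₀ - 1))
  obtain ⟨K, hK, hKsub⟩ := mem_cocompact.mp (htailp.and htailm)
  obtain ⟨r, hr⟩ := hK.isBounded.subset_closedBall 0
  set R : ℝ := max r 1 with hR
  have hR1 : (1:ℝ) ≤ R := le_max_right _ _
  have hR0 : (0:ℝ) ≤ R := by linarith
  have hKIcc : K ⊆ Icc (-R) R := by
    intro x hx
    have h1 : |x| ≤ r := by
      have := hr hx
      rwa [Metric.mem_closedBall, Real.dist_eq, sub_zero] at this
    have h2 : |x| ≤ R := le_trans h1 (le_max_left _ _)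
    exact abs_le.mp h2
  have htail' : ∀ u, u ∉ Icc (-R) R → F βp u ≤ c₀ - 1 ∧ F βm u ≤ c₀ - 1 := by
    intro u hu
    exact hKsub (fun h => hu (hKIcc h))
  -- comparison: any β in the δ-box around β₀ (with the sign constraints)
  -- is dominated pointwise by βp or βm
  have hcomp : ∀ β : Fin s → ℝ, (∀ i, |β i - β₀ i| ≤ δ) →
      ∀ u : ℝ, F β u ≤ max (F βp u) (F βm u) := by
    intro β hβd u
    rcases le_total 0 u with hu | hu
    · refine le_max_of_le_left ?_
      have hsum : ∑ i, β i * u ^ (m i) ≤ ∑ i, βp i * u ^ (m i) := by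
        apply Finset.sum_le_sum
        intro i _
        by_cases hi : i = i0
        · subst hi
          have h1 : β i0 ≤ βp i0 := by
            have := (abs_le.mp (hβd i0)).2
            simp only [hβp]; linarith
          exact mul_le_mul_of_nonneg_right h1 (pow_nonneg hu _)
        · have hpow : 0 ≤ u ^ (m i) := (hmeven i hi).1.pow_nonneg u
          have h1 : β i ≤ βp i := by
            have := (abs_le.mp (hβd i)).2
            simp only [hβp]; linarith
          exact mul_le_mul_of_nonneg_right h1 hpow
      simp only [hF]; linarith
    · refine le_max_of_le_right ?_
      have hsum : ∑ i, β i * u ^ (m i) ≤ ∑ i, βm i * u ^ (m i) := by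
        apply Finset.sum_le_sum
        intro i _
        by_cases hi : i = i0
        · subst hi
          have h1 : βm i0 ≤ β i0 := by
            have := (abs_le.mp (hβd i0)).1
            rw [hβmi0]; linarith
          have hm1 : m i0 = 1 := by rw [hi0, hm0]
          rw [hm1, pow_one]
          exact mul_le_mul_of_nonpos_right h1 hu
        · have hpow : 0 ≤ u ^ (m i) := (hmeven i hi).1.pow_nonneg u
          have h1 : β i ≤ βm i := by
            have := (abs_le.mp (hβd i)).2
            rw [hβmne i hi]; linarith
          exact mul_le_mul_of_nonneg_right h1 hpow
      simp only [hF]; linarith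
  -- bound on the compact window
  have hIm : ∀ γ : Fin s → ℝ, ∀ u ∈ Icc (-R) R, F γ u ≤ ∑ i, |γ i| * R ^ (m i) := by
    intro γ u hu
    have hInn := IfunR_nonneg μ u
    have hsum : ∑ i, γ i * u ^ (m i) ≤ ∑ i, |γ i| * R ^ (m i) := by
      apply Finset.sum_le_sum
      intro i _
      calc γ i * u ^ (m i) ≤ |γ i * u ^ (m i)| := le_abs_self _
        _ = |γ i| * |u| ^ (m i) := by rw [abs_mul, abs_pow]
        _ ≤ |γ i| * R ^ (m i) := by
            apply mul_le_mul_of_nonneg_left _ (abs_nonneg _)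
            exact pow_le_pow_left₀ (abs_nonneg u) (abs_le.mpr ⟨hu.1, hu.2⟩) _
    simp only [hF]; linarith
  have hbddIm : ∀ γ : Fin s → ℝ, BddAbove (F γ '' Icc (-R) R) := by
    intro γ
    refine ⟨∑ i, |γ i| * R ^ (m i), ?_⟩
    rintro y ⟨u, hu, rfl⟩
    exact hIm γ u hu
  have h0mem : (0:ℝ) ∈ Icc (-R) R := ⟨by linarith, by linarith⟩
  set G : (Fin s → ℝ) → ℝ := fun γ => sSup (F γ '' Icc (-R) R) with hG
  set C : ℝ := ∑ i : Fin s, R ^ (m i) with hC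
  have hC0 : 0 ≤ C := Finset.sum_nonneg fun i _ => pow_nonneg hR0 _
  -- one-sided Lipschitz bound for G
  have hGlip1 : ∀ γ₁ γ₂ : Fin s → ℝ, G γ₁ ≤ G γ₂ + C * dist γ₁ γ₂ := by
    intro γ₁ γ₂
    have hne : (F γ₁ '' Icc (-R) R).Nonempty := ⟨F γ₁ 0, 0, h0mem, rfl⟩
    apply csSup_le hne
    rintro y ⟨u, hu, rfl⟩
    have h1 : ∑ i, γ₁ i * u ^ (m i) - ∑ i, γ₂ i * u ^ (m i) ≤ C * dist γ₁ γ₂ := by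
      rw [← Finset.sum_sub_distrib]
      have : ∀ i ∈ Finset.univ, γ₁ i * u ^ (m i) - γ₂ i * u ^ (m i)
          ≤ dist γ₁ γ₂ * R ^ (m i) := by
        intro i _
        calc γ₁ i * u ^ (m i) - γ₂ i * u ^ (m i)
            = (γ₁ i - γ₂ i) * u ^ (m i) := by ring
          _ ≤ |(γ₁ i - γ₂ i) * u ^ (m i)| := le_abs_self _
          _ = |γ₁ i - γ₂ i| * |u| ^ (m i) := by rw [abs_mul, abs_pow]
          _ ≤ dist γ₁ γ₂ * R ^ (m i) := by
              apply mul_le_mul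
              · rw [← Real.dist_eq]; exact dist_le_pi_dist γ₁ γ₂ i
              · exact pow_le_pow_left₀ (abs_nonneg u) (abs_le.mpr ⟨hu.1, hu.2⟩) _
              · positivity
              · exact dist_nonneg
      calc ∑ i, (γ₁ i * u ^ (m i) - γ₂ i * u ^ (m i))
          ≤ ∑ i, dist γ₁ γ₂ * R ^ (m i) := Finset.sum_le_sum this
        _ = C * dist γ₁ γ₂ := by rw [← Finset.mul_sum, mul_comm, hC]
    have h2 : F γ₂ u ≤ G γ₂ := le_csSup (hbddIm γ₂) ⟨u, hu, rfl⟩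
    have h3 : F γ₁ u ≤ F γ₂ u + C * dist γ₁ γ₂ := by
      simp only [hF] at *; linarith
    linarith
  have hGcont : Continuous G := by
    have hlip : LipschitzWith (Real.toNNReal C) G := by
      apply LipschitzWith.of_dist_le_mul
      intro γ₁ γ₂
      rw [Real.coe_toNNReal C hC0, Real.dist_eq, abs_sub_le_iff]
      constructor
      · have := hGlip1 γ₁ γ₂; linarith
      · have := hGlip1 γ₂ γ₁; rw [dist_comm] at this; linarith
    exact hlip.continuous
  -- on the δ-neighbourhood inside B, the full sup equals the sup over the window
  have hsup : ∀ β ∈ B, (∀ i, |β i - β₀ i| ≤ δ) → (⨆ u : ℝ, F β u) = G β := by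
    intro β hβB hβd
    have hb : ∀ u, u ∉ Icc (-R) R → F β u ≤ c₀ - 1 := fun u hu =>
      le_trans (hcomp β hβd u) (max_le (htail' u hu).1 (htail' u hu).2)
    have hbdd : BddAbove (Set.range (F β)) := by
      refine ⟨max (∑ i, |β i| * R ^ (m i)) (c₀ - 1), ?_⟩
      rintro y ⟨u, rfl⟩
      by_cases hu : u ∈ Icc (-R) R
      · exact le_max_of_le_left (hIm β u hu)
      · exact le_max_of_le_right (hb u hu)
    apply le_antisymm
    · apply ciSup_le
      intro u
      by_cases hu : u ∈ Icc (-R) R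
      · exact le_csSup (hbddIm β) ⟨u, hu, rfl⟩
      · calc F β u ≤ c₀ - 1 := hb u hu
          _ ≤ F β 0 := by rw [hFzero, hc₀]; linarith
          _ ≤ G β := le_csSup (hbddIm β) ⟨0, h0mem, rfl⟩
    · refine csSup_le ⟨F β 0, 0, h0mem, rfl⟩ ?_
      rintro y ⟨u, _, rfl⟩
      exact le_ciSup hbdd u
  -- conclude
  have hN : B ∩ Metric.ball β₀ δ ∈ 𝓝[B] β₀ :=
    inter_mem self_mem_nhdsWithin
      (mem_nhdsWithin_of_mem_nhds (Metric.ball_mem_nhds _ hδpos))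
  have hcoord : ∀ β : Fin s → ℝ, β ∈ Metric.ball β₀ δ → ∀ i, |β i - β₀ i| ≤ δ := by
    intro β hβ i
    have h1 : dist (β i) (β₀ i) ≤ dist β β₀ := dist_le_pi_dist β β₀ i
    have h2 : dist β β₀ < δ := Metric.mem_ball.mp hβ
    rw [Real.dist_eq] at h1
    linarith
  have heq : (fun β : Fin s → ℝ => ⨆ u : ℝ, F β u) =ᶠ[𝓝[B] β₀] G := by
    filter_upwards [hN] with β hβ
    exact hsup β hβ.1 (hcoord β hβ.2)
  have heq0 : (⨆ u : ℝ, F β₀ u) = G β₀ := by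
    apply hsup β₀ hβ₀
    intro i
    simp [hδpos.le]
  exact (hGcont.continuousWithinAt).congr_of_eventuallyEq heq heq0

end
end

section
/- Fix β₁, β₂ ∈ ℝ and let C₄ > 0 satisfy C₄ ∫_ℝ e^{−x⁴} dx = 1. For an n×n symmetric real matrix x with zero diagonal, let T(x) = (β₁/n²) Σ_{i,j} x_{ij} + (β₂/n³) Σ_{i=1}^n (Σ_{j=1}^n x_{ij})², and for l > 0 let x^l be the entrywise truncation (x^l)_{ij} = min(max(x_{ij}, −l), l). Then for every ε > 0, limsup_{l→∞} limsup_{n→∞} (1/n²) ln ( C₄^{n(n−1)/2} ∫_{{|T(x) − T(x^l)| > ε}} exp(n² T(x) − Σ_{i<j} x_{ij}⁴) ∏_{i<j} dx_{ij} ) = −∞, where the integral is the Lebesgue integral over all symmetric matrices with zero diagonal, identified with ℝ^{n(n−1)/2}. In particular, condition (C2)' holds for the edge–two-star model with base measure of density C₄ e^{−x⁴}. -/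
open MeasureTheory Filter Set ProbabilityTheory
open scoped ENNReal Topology

noncomputable section

/-- Index set of above-diagonal entries of an `n × n` matrix. -/
abbrev UpIdx (n : ℕ) := {p : Fin n × Fin n // p.1 < p.2}

/-- The i.i.d. base measure on the above-diagonal entries. -/
def Pmeas (μ : Measure ℝ) (n : ℕ) : Measure (UpIdx n → ℝ) :=
  Measure.pi fun _ => μ

/-- The symmetric matrix (with zero diagonal) built from above-diagonal entries. -/
def matOf {n : ℕ} (x : UpIdx n → ℝ) (i j : Fin n) : ℝ :=
  if h : i < j then x ⟨(i, j), h⟩ else if h' : j < i then x ⟨(j, i), h'⟩ else 0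

/-- The edge–two-star exponent `β₁ Σ_{i,j} x_{ij} + (β₂/n) Σ_i (Σ_j x_{ij})²`. -/
def twoStarExp (n : ℕ) (β₁ β₂ : ℝ) (m : Fin n → Fin n → ℝ) : ℝ :=
  β₁ * (∑ i, ∑ j, m i j) + (β₂ / n) * ∑ i, (∑ j, m i j) ^ 2

/-- The normalized edge–two-star statistic
`T(x) = (β₁/n²) Σ_{i,j} x_{ij} + (β₂/n³) Σ_i (Σ_j x_{ij})²`. -/
def Tmat (n : ℕ) (β₁ β₂ : ℝ) (m : Fin n → Fin n → ℝ) : ℝ :=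
  (β₁ / (n : ℝ) ^ 2) * (∑ i, ∑ j, m i j) + (β₂ / (n : ℝ) ^ 3) * ∑ i, (∑ j, m i j) ^ 2

/-- Truncation `f_l` at level `l`. -/
def trunc (l q : ℝ) : ℝ := min (max q (-l)) l

/-- Entrywise truncation of a matrix. -/
def truncM {n : ℕ} (l : ℝ) (m : Fin n → Fin n → ℝ) : Fin n → Fin n → ℝ :=
  fun i j => trunc l (m i j)

/-- Extended-real logarithm (`= −∞` on nonpositive reals). -/
def elog (r : ℝ) : EReal := if r ≤ 0 then ⊥ else ((Real.log r : ℝ) : EReal)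

/-!
On the event `|T(x) - T(x^l)| > ε` the quartic mass `Σ x_{ij}⁴` is at least of order `ε l² n²`:
an entry moved by the truncation has `|y| > l`, so its error `e = |y - f_l(y)| ≤ |y|` satisfies
`e l³ ≤ y⁴` and `e² l² ≤ y⁴`, which controls the edge and (via Cauchy–Schwarz on the row sums)
the two-star part of `T(x) - T(x^l)`. On the other hand `n² T(x) ≤ c n² + ¼ Σ x⁴`. So on that
event the integrand is at most `exp((c - γ l²) n² - ¼ Σ x⁴)`, whose integral factorises into
`(∫ e^{-y⁴/4})^{n(n-1)/2}`; together with `C₄^{n(n-1)/2}` this is `e^{O(n²)}`, and the inner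
limsup is at most `B - γ l²`, which tends to `-∞` with `l`.
-/

lemma abs_trunc_le {l : ℝ} (hl : 0 ≤ l) (y : ℝ) : |trunc l y| ≤ l :=
  abs_le.2 ⟨le_min (le_max_right _ _) (by linarith), min_le_right _ _⟩

lemma trunc_of_abs_le {l y : ℝ} (h : |y| ≤ l) : trunc l y = y := by
  rw [trunc, max_eq_left (neg_le_of_abs_le h), min_eq_left (le_of_abs_le h)]

lemma abs_sub_trunc_le_abs {l : ℝ} (hl : 0 ≤ l) (y : ℝ) : |y - trunc l y| ≤ |y| := by
  unfold trunc
  grind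

lemma abs_sub_trunc_pow_mul_pow_le {l : ℝ} (hl : 0 ≤ l) {a : ℕ} (ha : a ≠ 0) (b : ℕ) (y : ℝ) :
    |y - trunc l y| ^ a * l ^ b ≤ |y| ^ (a + b) := by
  rcases le_or_gt |y| l with hy | hy
  · rw [trunc_of_abs_le hy, sub_self, abs_zero, zero_pow ha, zero_mul]
    positivity
  · rw [pow_add]
    exact mul_le_mul (pow_le_pow_left₀ (abs_nonneg _) (abs_sub_trunc_le_abs hl y) a)
      (pow_le_pow_left₀ hl hy.le b) (by positivity) (by positivity)

lemma sum_sum_matOf {n : ℕ} (F : ℝ → ℝ) (hF : F 0 = 0) (x : UpIdx n → ℝ) :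
    ∑ i, ∑ j, F (matOf x i j) = 2 * ∑ p : UpIdx n, F (x p) := by
  set G : Fin n → Fin n → ℝ := fun i j => if h : i < j then F (x ⟨(i, j), h⟩) else 0
  have hsplit : ∀ i j, F (matOf x i j) = G i j + G j i := by
    intro i j
    rcases lt_trichotomy i j with h | rfl | h
    · simp [G, matOf, h, h.not_gt]
    · simp [G, matOf, hF]
    · simp [G, matOf, h, h.not_gt]
  have hG : ∑ i, ∑ j, G i j = ∑ p : UpIdx n, F (x p) := by
    rw [← Fintype.sum_prod_type',
      ← Fintype.sum_subtype_add_sum_subtype (fun p : Fin n × Fin n => p.1 < p.2)]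
    have hpos : ∀ p : UpIdx n, G p.1.1 p.1.2 = F (x p) := fun p => dif_pos p.2
    have hneg : ∀ p : {p : Fin n × Fin n // ¬p.1 < p.2}, G p.1.1 p.1.2 = 0 :=
      fun p => dif_neg p.2
    simp only [hpos, hneg, Finset.sum_const_zero, add_zero]
  simp only [hsplit, Finset.sum_add_distrib]
  rw [Finset.sum_comm (f := fun i j => G j i), hG, two_mul]

lemma sq_mul_Tmat {n : ℕ} (hn : n ≠ 0) (β₁ β₂ : ℝ) (m : Fin n → Fin n → ℝ) :
    (n : ℝ) ^ 2 * Tmat n β₁ β₂ m = twoStarExp n β₁ β₂ m := by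
  unfold Tmat twoStarExp
  field_simp

lemma mul_abs_add_mul_sq_le {a : ℝ} (ha : 0 ≤ a) (b y : ℝ) :
    a * |y| + b * y ^ 2 ≤ a + 2 * (a + b) ^ 2 + y ^ 4 / 8 := by
  rw [← sq_abs y, ← Even.pow_abs (by decide : Even 4) y]
  nlinarith [sq_nonneg (|y| - 1), sq_nonneg (|y| ^ 2 - 4 * (a + b)), mul_nonneg ha (abs_nonneg y)]

lemma div_card_mul_sq_sum_le {ι : Type*} [Fintype ι] (β : ℝ) (v : ι → ℝ) :
    β / Fintype.card ι * (∑ j, v j) ^ 2 ≤ |β| * ∑ j, v j ^ 2 := by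
  rcases isEmpty_or_nonempty ι with hι | hι
  · simp
  calc β / Fintype.card ι * (∑ j, v j) ^ 2
      ≤ |β| / Fintype.card ι * (Fintype.card ι * ∑ j, v j ^ 2) := by
        gcongr
        · exact le_abs_self β
        · simpa using sq_sum_le_card_mul_sum_sq (s := Finset.univ) (f := v)
    _ = |β| * ∑ j, v j ^ 2 := by field_simp

lemma twoStarExp_le (n : ℕ) (β₁ β₂ : ℝ) (m : Fin n → Fin n → ℝ) :
    twoStarExp n β₁ β₂ m ≤
      (|β₁| + 2 * (|β₁| + |β₂|) ^ 2) * (n : ℝ) ^ 2 + (∑ i, ∑ j, m i j ^ 4) / 8 := by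
  have hedge : β₁ * ∑ i, ∑ j, m i j ≤ |β₁| * ∑ i, ∑ j, |m i j| :=
    calc β₁ * ∑ i, ∑ j, m i j ≤ |β₁| * |∑ i, ∑ j, m i j| := by
          rw [← abs_mul]; exact le_abs_self _
      _ ≤ |β₁| * ∑ i, ∑ j, |m i j| := by
          gcongr
          exact (Finset.abs_sum_le_sum_abs _ _).trans
            (Finset.sum_le_sum fun i _ => Finset.abs_sum_le_sum_abs _ _)
  have hstar : β₂ / n * ∑ i, (∑ j, m i j) ^ 2 ≤ |β₂| * ∑ i, ∑ j, m i j ^ 2 := by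
    rw [Finset.mul_sum, Finset.mul_sum]
    exact Finset.sum_le_sum fun i _ => by
      simpa using div_card_mul_sq_sum_le β₂ (m i)
  calc twoStarExp n β₁ β₂ m ≤ ∑ i, ∑ j, (|β₁| * |m i j| + |β₂| * m i j ^ 2) := by
        simp only [Finset.sum_add_distrib, ← Finset.mul_sum, twoStarExp]
        exact add_le_add hedge hstar
    _ ≤ ∑ i : Fin n, ∑ j : Fin n, (|β₁| + 2 * (|β₁| + |β₂|) ^ 2 + m i j ^ 4 / 8) :=
        Finset.sum_le_sum fun i _ => Finset.sum_le_sum fun j _ =>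
          mul_abs_add_mul_sq_le (abs_nonneg _) _ _
    _ = _ := by
        simp only [Finset.sum_add_distrib, Finset.sum_const, Finset.card_univ, Fintype.card_fin,
          nsmul_eq_mul, ← Finset.sum_div]
        ring

section RowTruncation

variable {ι : Type*} [Fintype ι] {l : ℝ}

lemma pow_three_mul_sum_abs_sub_trunc_le (hl : 0 ≤ l) (v : ι → ℝ) :
    l ^ 3 * ∑ j, |v j - trunc l (v j)| ≤ ∑ j, v j ^ 4 := by
  rw [Finset.mul_sum]
  refine Finset.sum_le_sum fun j _ => ?_
  simpa [mul_comm, Even.pow_abs (by decide : Even 4)] using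
    abs_sub_trunc_pow_mul_pow_le hl one_ne_zero 3 (v j)

lemma sq_mul_sq_sum_abs_sub_trunc_le (hl : 0 ≤ l) (v : ι → ℝ) :
    l ^ 2 * (∑ j, |v j - trunc l (v j)|) ^ 2 ≤ Fintype.card ι * ∑ j, v j ^ 4 :=
  calc l ^ 2 * (∑ j, |v j - trunc l (v j)|) ^ 2
      ≤ l ^ 2 * (Fintype.card ι * ∑ j, |v j - trunc l (v j)| ^ 2) := by
        gcongr
        simpa using sq_sum_le_card_mul_sum_sq (s := Finset.univ)
          (f := fun j => |v j - trunc l (v j)|)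
    _ = Fintype.card ι * ∑ j, |v j - trunc l (v j)| ^ 2 * l ^ 2 := by
        rw [← Finset.sum_mul]; ring
    _ ≤ Fintype.card ι * ∑ j, v j ^ 4 := by
        gcongr with j
        simpa [Even.pow_abs (by decide : Even 4)] using
          abs_sub_trunc_pow_mul_pow_le hl two_ne_zero 2 (v j)

lemma sq_mul_abs_sum_sub_sum_trunc_le (hl : 1 ≤ l) (v : ι → ℝ) :
    l ^ 2 * |∑ j, v j - ∑ j, trunc l (v j)| ≤ ∑ j, v j ^ 4 :=
  calc l ^ 2 * |∑ j, v j - ∑ j, trunc l (v j)| ≤ l ^ 3 * ∑ j, |v j - trunc l (v j)| := by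
        rw [← Finset.sum_sub_distrib]
        exact mul_le_mul (pow_le_pow_right₀ hl (by norm_num)) (Finset.abs_sum_le_sum_abs _ _)
          (abs_nonneg _) (by positivity)
    _ ≤ ∑ j, v j ^ 4 := pow_three_mul_sum_abs_sub_trunc_le (by linarith) v

lemma sq_mul_abs_sq_sum_sub_sq_sum_trunc_le (hl : 0 ≤ l) (v : ι → ℝ) :
    l ^ 2 * |(∑ j, v j) ^ 2 - (∑ j, trunc l (v j)) ^ 2| ≤
      3 * Fintype.card ι * ∑ j, v j ^ 4 := by
  set d := ∑ j, |v j - trunc l (v j)|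
  set s := ∑ j, trunc l (v j)
  have hd : |∑ j, v j - s| ≤ d := by
    rw [← Finset.sum_sub_distrib]
    exact Finset.abs_sum_le_sum_abs _ _
  have hs : |s| ≤ Fintype.card ι * l := by
    refine (Finset.abs_sum_le_sum_abs _ _).trans ?_
    simpa using Finset.sum_le_sum fun j (_ : j ∈ Finset.univ) => abs_trunc_le hl (v j)
  have hsum : |∑ j, v j + s| ≤ d + 2 * (Fintype.card ι * l) :=
    calc |∑ j, v j + s| = |(∑ j, v j - s) + 2 * s| := by ring_nf
      _ ≤ |∑ j, v j - s| + 2 * |s| := by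
        refine (abs_add_le _ _).trans ?_
        rw [abs_mul, abs_two]
      _ ≤ d + 2 * (Fintype.card ι * l) := by linarith
  calc l ^ 2 * |(∑ j, v j) ^ 2 - s ^ 2| = l ^ 2 * (|∑ j, v j - s| * |∑ j, v j + s|) := by
        rw [← abs_mul]; ring_nf
    _ ≤ l ^ 2 * (d * (d + 2 * (Fintype.card ι * l))) := by gcongr
    _ = l ^ 2 * d ^ 2 + 2 * Fintype.card ι * (l ^ 3 * d) := by ring
    _ ≤ Fintype.card ι * ∑ j, v j ^ 4 + 2 * Fintype.card ι * ∑ j, v j ^ 4 :=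
        add_le_add (sq_mul_sq_sum_abs_sub_trunc_le hl v)
          (mul_le_mul_of_nonneg_left (pow_three_mul_sum_abs_sub_trunc_le hl v) (by positivity))
    _ = 3 * Fintype.card ι * ∑ j, v j ^ 4 := by ring

end RowTruncation

lemma sq_mul_abs_twoStarExp_sub_truncM_le (n : ℕ) (β₁ β₂ : ℝ) {l : ℝ} (hl : 1 ≤ l)
    (m : Fin n → Fin n → ℝ) :
    l ^ 2 * |twoStarExp n β₁ β₂ m - twoStarExp n β₁ β₂ (truncM l m)| ≤
      (|β₁| + 3 * |β₂|) * ∑ i, ∑ j, m i j ^ 4 := by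
  rcases Nat.eq_zero_or_pos n with rfl | hn
  · simp [twoStarExp]
  set X := ∑ i, (∑ j, m i j - ∑ j, trunc l (m i j))
  set Y := ∑ i, ((∑ j, m i j) ^ 2 - (∑ j, trunc l (m i j)) ^ 2)
  set Q := ∑ i, ∑ j, m i j ^ 4
  have hX : l ^ 2 * |X| ≤ Q := by
    refine (mul_le_mul_of_nonneg_left (Finset.abs_sum_le_sum_abs _ _) (by positivity)).trans ?_
    rw [Finset.mul_sum]
    exact Finset.sum_le_sum fun i _ => sq_mul_abs_sum_sub_sum_trunc_le hl (m i)
  have hY : l ^ 2 * |Y| ≤ 3 * n * Q := by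
    refine (mul_le_mul_of_nonneg_left (Finset.abs_sum_le_sum_abs _ _) (by positivity)).trans ?_
    rw [Finset.mul_sum, Finset.mul_sum]
    exact Finset.sum_le_sum fun i _ => by
      simpa using sq_mul_abs_sq_sum_sub_sq_sum_trunc_le (by linarith) (m i)
  have hdiff :
      twoStarExp n β₁ β₂ m - twoStarExp n β₁ β₂ (truncM l m) = β₁ * X + β₂ / n * Y := by
    simp only [twoStarExp, truncM, X, Y, Finset.sum_sub_distrib]
    ring
  calc l ^ 2 * |twoStarExp n β₁ β₂ m - twoStarExp n β₁ β₂ (truncM l m)|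
      ≤ l ^ 2 * (|β₁| * |X| + |β₂| / n * |Y|) := by
        rw [hdiff]
        gcongr
        refine (abs_add_le _ _).trans_eq ?_
        rw [abs_mul, abs_mul, abs_div, Nat.abs_cast]
    _ = |β₁| * (l ^ 2 * |X|) + |β₂| / n * (l ^ 2 * |Y|) := by ring
    _ ≤ |β₁| * Q + |β₂| / n * (3 * n * Q) := by gcongr
    _ = (|β₁| + 3 * |β₂|) * Q := by field_simp

lemma sq_mul_Tmat_matOf_le {n : ℕ} (hn : n ≠ 0) (β₁ β₂ : ℝ) (x : UpIdx n → ℝ) :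
    (n : ℝ) ^ 2 * Tmat n β₁ β₂ (matOf x) ≤
      (|β₁| + 2 * (|β₁| + |β₂|) ^ 2) * (n : ℝ) ^ 2 + (∑ p, x p ^ 4) / 4 := by
  have := twoStarExp_le n β₁ β₂ (matOf x)
  rw [sum_sum_matOf (· ^ 4) (by norm_num)] at this
  rw [sq_mul_Tmat hn]
  linarith

lemma mul_sq_le_of_lt_abs_Tmat_sub_truncM {n : ℕ} (hn : n ≠ 0) (β₁ β₂ : ℝ) {ε l : ℝ}
    (hl : 1 ≤ l) (x : UpIdx n → ℝ)
    (hx : ε < |Tmat n β₁ β₂ (matOf x) - Tmat n β₁ β₂ (truncM l (matOf x))|) :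
    ε * l ^ 2 * (n : ℝ) ^ 2 ≤ 2 * (|β₁| + 3 * |β₂|) * ∑ p, x p ^ 4 := by
  have h := sq_mul_abs_twoStarExp_sub_truncM_le n β₁ β₂ hl (matOf x)
  rw [sum_sum_matOf (· ^ 4) (by norm_num), ← sq_mul_Tmat hn, ← sq_mul_Tmat hn, ← mul_sub,
    abs_mul, abs_of_nonneg (by positivity)] at h
  nlinarith [mul_le_mul_of_nonneg_right hx.le (by positivity : (0 : ℝ) ≤ l ^ 2 * (n : ℝ) ^ 2)]

/-- The `+ 1` in the rate constant keeps it positive when `β₁ = β₂ = 0`. -/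
lemma exponent_le_of_lt_abs_Tmat_sub_truncM {n : ℕ} (hn : n ≠ 0) (β₁ β₂ : ℝ) {ε l : ℝ}
    (hl : 1 ≤ l) (x : UpIdx n → ℝ)
    (hx : ε < |Tmat n β₁ β₂ (matOf x) - Tmat n β₁ β₂ (truncM l (matOf x))|) :
    (n : ℝ) ^ 2 * Tmat n β₁ β₂ (matOf x) - ∑ p, x p ^ 4 ≤
      (|β₁| + 2 * (|β₁| + |β₂|) ^ 2 - ε / (4 * (|β₁| + 3 * |β₂| + 1)) * l ^ 2) * (n : ℝ) ^ 2
        + ∑ p, -x p ^ 4 / 4 := by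
  have hT := sq_mul_Tmat_matOf_le hn β₁ β₂ x
  have hbad := mul_sq_le_of_lt_abs_Tmat_sub_truncM hn β₁ β₂ hl x hx
  have hsum : 0 ≤ ∑ p, x p ^ 4 := by positivity
  have hrate : ε / (4 * (|β₁| + 3 * |β₂| + 1)) * l ^ 2 * (n : ℝ) ^ 2 ≤ (∑ p, x p ^ 4) / 2 := by
    rw [div_mul_eq_mul_div, div_mul_eq_mul_div, div_le_div_iff₀ (by positivity) two_pos]
    nlinarith [abs_nonneg β₁, abs_nonneg β₂]
  have hneg : ∑ p, -x p ^ 4 / 4 = -(∑ p, x p ^ 4) / 4 := by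
    rw [← Finset.sum_div, Finset.sum_neg_distrib]
  rw [hneg]
  linarith

lemma setIntegral_exp_le_of_le_add_sum {ι E : Type*} [Fintype ι] [MeasurableSpace E]
    {μ : Measure E} [SigmaFinite μ] {S : Set (ι → E)} (hS : MeasurableSet S)
    {φ : (ι → E) → ℝ} {g : E → ℝ} (hg : Integrable (fun y => Real.exp (g y)) μ) {a : ℝ}
    (h : ∀ x ∈ S, φ x ≤ a + ∑ i, g (x i)) :
    ∫ x in S, Real.exp (φ x) ∂(Measure.pi fun _ => μ) ≤
      Real.exp a * (∫ y, Real.exp (g y) ∂μ) ^ Fintype.card ι := by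
  have hG : Integrable (fun x : ι → E => Real.exp a * ∏ i, Real.exp (g (x i)))
      (Measure.pi fun _ => μ) :=
    (Integrable.fintype_prod fun _ => hg).const_mul _
  calc ∫ x in S, Real.exp (φ x) ∂(Measure.pi fun _ => μ)
      ≤ ∫ x in S, Real.exp a * ∏ i, Real.exp (g (x i)) ∂(Measure.pi fun _ => μ) := by
        refine integral_mono_of_nonneg (ae_of_all _ fun x => (Real.exp_pos _).le)
          hG.integrableOn ?_
        filter_upwards [ae_restrict_mem hS] with x hx
        rw [← Real.exp_sum, ← Real.exp_add]
        exact Real.exp_le_exp.2 (h x hx)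
    _ ≤ ∫ x, Real.exp a * ∏ i, Real.exp (g (x i)) ∂(Measure.pi fun _ => μ) :=
        setIntegral_le_integral hG (ae_of_all _ fun x => by positivity)
    _ = Real.exp a * (∫ y, Real.exp (g y) ∂μ) ^ Fintype.card ι := by
        rw [integral_const_mul, integral_fintype_prod_eq_pow fun y => Real.exp (g y)]

lemma integrable_exp_neg_pow_four_div_four : Integrable fun y : ℝ => Real.exp (-y ^ 4 / 4) := by
  refine ((integrable_exp_neg_mul_sq (b := 1 / 4) (by norm_num)).const_mul
    (Real.exp (1 / 4))).mono' (by fun_prop) (ae_of_all _ fun y => ?_)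
  rw [Real.norm_of_nonneg (Real.exp_pos _).le, ← Real.exp_add]
  exact Real.exp_le_exp.2 (by nlinarith [sq_nonneg (y ^ 2 - 1)])

lemma pow_le_exp_log_max_one_mul {a : ℝ} (ha : 0 ≤ a) {k N : ℕ} (hk : k ≤ N) :
    a ^ k ≤ Real.exp (Real.log (max 1 a) * N) :=
  calc a ^ k ≤ max 1 a ^ N :=
        (pow_le_pow_left₀ ha (le_max_right _ _) k).trans (pow_le_pow_right₀ (le_max_left _ _) hk)
    _ = Real.exp (Real.log (max 1 a) * N) := by
        rw [mul_comm, Real.exp_nat_mul, Real.exp_log (lt_max_of_lt_left one_pos)]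

@[fun_prop]
lemma continuous_matOf_apply {n : ℕ} (i j : Fin n) :
    Continuous fun x : UpIdx n → ℝ => matOf x i j := by
  unfold matOf
  split_ifs <;> fun_prop

lemma measurableSet_lt_abs_Tmat_sub_truncM (n : ℕ) (β₁ β₂ ε l : ℝ) :
    MeasurableSet
      {x : UpIdx n → ℝ | ε < |Tmat n β₁ β₂ (matOf x) - Tmat n β₁ β₂ (truncM l (matOf x))|} := by
  refine (isOpen_lt continuous_const ?_).measurableSet
  unfold Tmat truncM trunc
  fun_prop

lemma exists_truncation_integral_le_exp (β₁ β₂ : ℝ) {C₄ : ℝ} (hC₄ : 0 ≤ C₄) {ε : ℝ}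
    (hε : 0 < ε) :
    ∃ B γ : ℝ, 0 < γ ∧ ∀ l : ℝ, 1 ≤ l → ∀ n : ℕ, n ≠ 0 →
      C₄ ^ (n * (n - 1) / 2) *
        ∫ x in {x : UpIdx n → ℝ |
            ε < |Tmat n β₁ β₂ (matOf x) - Tmat n β₁ β₂ (truncM l (matOf x))|},
          Real.exp ((n : ℝ) ^ 2 * Tmat n β₁ β₂ (matOf x) - ∑ p : UpIdx n, (x p) ^ 4)
          ∂(Measure.pi fun _ : UpIdx n => (volume : Measure ℝ))
      ≤ Real.exp ((B - γ * l ^ 2) * (n : ℝ) ^ 2) := by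
  set A := ∫ y : ℝ, Real.exp (-y ^ 4 / 4)
  set c := |β₁| + 2 * (|β₁| + |β₂|) ^ 2
  set γ := ε / (4 * (|β₁| + 3 * |β₂| + 1))
  refine ⟨c + Real.log (max 1 C₄) + Real.log (max 1 A), γ, by positivity, fun l hl n hn => ?_⟩
  have hI := setIntegral_exp_le_of_le_add_sum (measurableSet_lt_abs_Tmat_sub_truncM n β₁ β₂ ε l)
    integrable_exp_neg_pow_four_div_four
    fun x hx => exponent_le_of_lt_abs_Tmat_sub_truncM hn β₁ β₂ hl x hx
  have hC := pow_le_exp_log_max_one_mul hC₄ (N := n ^ 2) (k := n * (n - 1) / 2)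
    ((Nat.div_le_self _ _).trans (by rw [sq]; exact Nat.mul_le_mul_left _ (Nat.sub_le _ _)))
  have hA := pow_le_exp_log_max_one_mul (integral_nonneg fun y => (Real.exp_pos _).le)
    (a := A) (N := n ^ 2) (k := Fintype.card (UpIdx n))
    ((Fintype.card_subtype_le _).trans (by simp [sq]))
  calc _ ≤ Real.exp (Real.log (max 1 C₄) * ↑(n ^ 2)) *
        (Real.exp ((c - γ * l ^ 2) * (n : ℝ) ^ 2) * Real.exp (Real.log (max 1 A) * ↑(n ^ 2))) :=
        mul_le_mul hC (hI.trans (mul_le_mul_of_nonneg_left hA (Real.exp_pos _).le))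
          (integral_nonneg fun x => (Real.exp_pos _).le) (by positivity)
    _ = _ := by
        rw [← Real.exp_add, ← Real.exp_add]
        push_cast
        ring_nf

lemma one_div_mul_elog_le {r b c : ℝ} (hc : 0 < c) (h : r ≤ Real.exp (b * c)) :
    ((1 / c : ℝ) : EReal) * elog r ≤ b := by
  unfold elog
  split_ifs with hr
  · rw [EReal.coe_mul_bot_of_pos (by positivity)]
    exact bot_le
  · have hlog := Real.log_le_log (not_le.1 hr) h
    rw [Real.log_exp] at hlog
    rw [← EReal.coe_mul, EReal.coe_le_coe_iff, one_div_mul_eq_div, div_le_iff₀ hc]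
    exact hlog

lemma limsup_limsup_eq_bot_of_le {α β : Type*} {F : Filter α} {G : Filter β}
    {u : α → β → EReal} {f : α → ℝ} (hf : Tendsto f F atBot)
    (hu : ∀ᶠ a in F, ∀ᶠ b in G, u a b ≤ f a) :
    limsup (fun a => limsup (u a) G) F = ⊥ := by
  rw [EReal.eq_bot_iff_forall_lt]
  intro M
  refine lt_of_le_of_lt (limsup_le_of_le (by isBoundedDefault) ?_)
    (EReal.coe_lt_coe_iff.2 (sub_one_lt M))
  filter_upwards [hu, hf.eventually (eventually_le_atBot (M - 1))] with a ha hfa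
  exact (limsup_le_of_le (by isBoundedDefault) ha).trans (EReal.coe_le_coe_iff.2 hfa)

theorem quartic_two_star_condC2'_general
    (β₁ β₂ : ℝ) (C₄ : ℝ) (hC₄pos : 0 < C₄) :
    ∀ ε : ℝ, 0 < ε →
      Filter.limsup (fun l : ℝ =>
        Filter.limsup (fun n : ℕ =>
          (((1 / (n : ℝ) ^ 2 : ℝ)) : EReal) *
            elog (C₄ ^ (n * (n - 1) / 2) *
              ∫ x in {x : UpIdx n → ℝ |
                  ε < |Tmat n β₁ β₂ (matOf x) - Tmat n β₁ β₂ (truncM l (matOf x))|},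
                Real.exp ((n : ℝ) ^ 2 * Tmat n β₁ β₂ (matOf x) - ∑ p : UpIdx n, (x p) ^ 4)
                ∂(Measure.pi fun _ : UpIdx n => (volume : Measure ℝ)))) atTop) atTop
        = (⊥ : EReal) := by
  intro ε hε
  obtain ⟨B, γ, hγ, hbound⟩ := exists_truncation_integral_le_exp β₁ β₂ hC₄pos.le hε
  refine limsup_limsup_eq_bot_of_le (f := fun l => B - γ * l ^ 2) ?_ ?_
  · simp_rw [sub_eq_add_neg]
    exact tendsto_atBot_add_const_left _ B
      (tendsto_neg_atTop_atBot.comp ((tendsto_pow_atTop two_ne_zero).const_mul_atTop hγ))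
  · filter_upwards [eventually_ge_atTop 1] with l hl
    filter_upwards [eventually_ne_atTop 0] with n hn
    exact one_div_mul_elog_le (by positivity) (hbound l hl n hn)

/-- **Theorem (condition (C2)' for the `e^{−x⁴}` edge–two-star model).**
With base measure of density `C₄ e^{−x⁴}`, for every `ε > 0`,
`limsup_{l→∞} limsup_{n→∞} (1/n²) ln (C₄^{n(n−1)/2}
∫_{|T(x)−T(x^l)|>ε} exp(n²T(x) − Σ_{i<j} x_{ij}⁴) dx) = −∞`. -/
theorem quartic_two_star_condC2'
    (β₁ β₂ : ℝ) (C₄ : ℝ) (hC₄pos : 0 < C₄)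
    (hC₄ : C₄ * (∫ x : ℝ, Real.exp (-x ^ 4)) = 1) :
    ∀ ε : ℝ, 0 < ε →
      Filter.limsup (fun l : ℝ =>
        Filter.limsup (fun n : ℕ =>
          (((1 / (n : ℝ) ^ 2 : ℝ)) : EReal) *
            elog (C₄ ^ (n * (n - 1) / 2) *
              ∫ x in {x : UpIdx n → ℝ |
                  ε < |Tmat n β₁ β₂ (matOf x) - Tmat n β₁ β₂ (truncM l (matOf x))|},
                Real.exp ((n : ℝ) ^ 2 * Tmat n β₁ β₂ (matOf x) - ∑ p : UpIdx n, (x p) ^ 4)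
                ∂(Measure.pi fun _ : UpIdx n => (volume : Measure ℝ)))) atTop) atTop
        = (⊥ : EReal) :=
  quartic_two_star_condC2'_general β₁ β₂ C₄ hC₄pos

end
end

section
/- Let H be a finite simple graph with e = e(H) ≥ 1 edges, let l > 0, and let k : [0,1]² → ℝ be a symmetric measurable function with |k| ≤ l. If either k ≥ 0 everywhere or e is an even positive integer, then t(H, k) ≤ ∬_{[0,1]²} k(x,y)^e dx dy, where t(H, k) = ∫_{[0,1]^{V(H)}} ∏_{(i,j)∈E(H)} k(x_i, x_j) ∏_{i∈V(H)} dx_i. Moreover equality holds when k is a constant function. -/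
/-!
Bound `t(H,k)` by `t(H,|k|)`. The two endpoints of an edge are distinct coordinates, and any two
distinct coordinates of a uniform point of the cube are independent and uniform, so every edge
factor `|k(x_i,x_j)|` has `e`-th moment `∬ |k|^e`. Hölder's inequality for `e` factors, each with
exponent `e`, then gives `t(H,|k|) ≤ ∬ |k|^e`, and `|k|^e = k^e` when `k ≥ 0` or `e` is even.
-/

open MeasureTheory Filter Set
open scoped ENNReal Topology

noncomputable section

/-- Lebesgue measure on the unit cube `[0,1]^v`. -/
def cube (v : ℕ) : Measure (Fin v → ℝ) :=
  Measure.pi fun _ => volume.restrict (Icc (0:ℝ) 1)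

/-- Homomorphism density `t(H,k)` of a finite simple graph `H` in a kernel `k`. -/
def homDensity {v : ℕ} (G : SimpleGraph (Fin v)) [DecidableRel G.Adj]
    (k : ℝ → ℝ → ℝ) : ℝ :=
  ∫ x : Fin v → ℝ, (∏ e ∈ G.edgeFinset, k (x e.inf) (x e.sup)) ∂(cube v)

theorem Sym2.inf_ne_sup_of_not_isDiag {α : Type*} [LinearOrder α] {e : Sym2 α}
    (he : ¬ e.IsDiag) : e.inf ≠ e.sup := by
  induction e with
  | _ a b => simpa [inf_eq_sup] using he

theorem MeasureTheory.Measure.pi_map_eval_prodMk {ι : Type*} [Fintype ι] {Ω : ι → Type*}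
    [∀ i, MeasurableSpace (Ω i)] (μ : (i : ι) → Measure (Ω i))
    [∀ i, IsProbabilityMeasure (μ i)]
    {i j : ι} (hij : i ≠ j) :
    (Measure.pi μ).map (fun x => (x i, x j)) = (μ i).prod (μ j) := by
  have hindep : ProbabilityTheory.IndepFun (fun x => x i) (fun x => x j) (Measure.pi μ) :=
    (ProbabilityTheory.iIndepFun_pi (X := fun _ => id) fun _ => aemeasurable_id).indepFun hij
  rw [hindep.map_prod_eq_prod_map_map (measurable_pi_apply i).aemeasurable
    (measurable_pi_apply j).aemeasurable]
  exact congrArg₂ _ (measurePreserving_eval μ i).map_eq (measurePreserving_eval μ j).map_eq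

instance : IsProbabilityMeasure (volume.restrict (Icc (0:ℝ) 1)) :=
  ⟨by simp [Real.volume_Icc]⟩

instance (v : ℕ) : IsProbabilityMeasure (cube v) := by
  unfold cube; infer_instance

theorem volume_unitSquare : volume (Icc (0:ℝ) 1 ×ˢ Icc (0:ℝ) 1) = 1 := by
  rw [Measure.volume_eq_prod, Measure.prod_prod]; simp [Real.volume_Icc]

theorem lintegral_cube_comp_eval_pair {v : ℕ} {i j : Fin v} (hij : i ≠ j)
    {F : ℝ × ℝ → ℝ≥0∞} (hF : Measurable F) :
    ∫⁻ x, F (x i, x j) ∂cube v = ∫⁻ p in Icc (0:ℝ) 1 ×ˢ Icc (0:ℝ) 1, F p := by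
  rw [← lintegral_map hF (by fun_prop), cube, Measure.pi_map_eval_prodMk _ hij,
    Measure.prod_restrict, ← Measure.volume_eq_prod]

theorem ENNReal.lintegral_prod_le_of_lintegral_pow_eq {α ι : Type*} [MeasurableSpace α]
    {μ : Measure α} {s : Finset ι} (hs : s.Nonempty) {f : ι → α → ℝ≥0∞}
    (hf : ∀ i ∈ s, AEMeasurable (f i) μ) {A : ℝ≥0∞}
    (hA : ∀ i ∈ s, ∫⁻ a, f i a ^ s.card ∂μ = A) :
    ∫⁻ a, ∏ i ∈ s, f i a ∂μ ≤ A := by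
  have hn : (s.card : ℝ) ≠ 0 := by exact_mod_cast hs.card_pos.ne'
  have hroot : ∀ x : ℝ≥0∞, (x ^ s.card) ^ (s.card : ℝ)⁻¹ = x := fun x => by
    rw [← ENNReal.rpow_natCast, ← ENNReal.rpow_mul, mul_inv_cancel₀ hn, ENNReal.rpow_one]
  calc ∫⁻ a, ∏ i ∈ s, f i a ∂μ
      = ∫⁻ a, ∏ i ∈ s, (f i a ^ s.card) ^ (s.card : ℝ)⁻¹ ∂μ := by simp only [hroot]
    _ ≤ ∏ i ∈ s, (∫⁻ a, f i a ^ s.card ∂μ) ^ (s.card : ℝ)⁻¹ :=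
        ENNReal.lintegral_prod_norm_pow_le s (fun i hi => (hf i hi).pow_const _)
          (by simp [mul_inv_cancel₀ hn]) fun _ _ => by positivity
    _ = A := by
        rw [Finset.prod_congr rfl fun i hi => by rw [hA i hi], Finset.prod_const,
          ← ENNReal.rpow_natCast, ← ENNReal.rpow_mul, inv_mul_cancel₀ hn, ENNReal.rpow_one]

theorem homDensity_le_setIntegral_abs_pow {v : ℕ} (G : SimpleGraph (Fin v)) [DecidableRel G.Adj]
    {k : ℝ → ℝ → ℝ} (hkMeas : Measurable (Function.uncurry k)) {l : ℝ}
    (hkBdd : ∀ x y, |k x y| ≤ l) (hE : G.edgeFinset.Nonempty) :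
    homDensity G k ≤
      ∫ p in Icc (0:ℝ) 1 ×ˢ Icc (0:ℝ) 1, |k p.1 p.2| ^ G.edgeFinset.card := by
  set n := G.edgeFinset.card
  set F : ℝ × ℝ → ℝ≥0∞ := fun p => ENNReal.ofReal |k p.1 p.2|
  have hk : Measurable fun p : ℝ × ℝ => k p.1 p.2 := hkMeas
  have hF : Measurable F := by fun_prop
  have hFin : ∫⁻ p in Icc (0:ℝ) 1 ×ˢ Icc (0:ℝ) 1, F p ^ n ≠ ∞ :=
    (setLIntegral_lt_top_of_le_nnreal (by rw [volume_unitSquare]; exact ENNReal.one_ne_top)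
      ⟨l.toNNReal ^ n, fun p _ => by
        rw [ENNReal.coe_pow]; exact pow_le_pow_left' (ENNReal.ofReal_le_ofReal (hkBdd _ _)) n⟩).ne
  have hEdge : ∀ e ∈ G.edgeFinset, ∫⁻ x, F (x e.inf, x e.sup) ^ n ∂cube v
      = ∫⁻ p in Icc (0:ℝ) 1 ×ˢ Icc (0:ℝ) 1, F p ^ n := fun e he =>
    lintegral_cube_comp_eval_pair
      (Sym2.inf_ne_sup_of_not_isDiag (G.not_isDiag_of_mem_edgeSet (G.mem_edgeFinset.mp he)))
      (hF.pow_const n)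
  calc homDensity G k
      ≤ ∫ x, ∏ e ∈ G.edgeFinset, |k (x e.inf) (x e.sup)| ∂cube v := by
        simp_rw [← Finset.abs_prod]
        exact (le_abs_self _).trans abs_integral_le_integral_abs
    _ = (∫⁻ x, ∏ e ∈ G.edgeFinset, F (x e.inf, x e.sup) ∂cube v).toReal := by
        rw [integral_eq_lintegral_of_nonneg_ae (.of_forall fun _ => by positivity)
          (by fun_prop : Measurable _).aestronglyMeasurable]
        simp only [F, ENNReal.ofReal_prod_of_nonneg fun _ _ => abs_nonneg _]
    _ ≤ (∫⁻ p in Icc (0:ℝ) 1 ×ˢ Icc (0:ℝ) 1, F p ^ n).toReal :=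
        ENNReal.toReal_mono hFin (ENNReal.lintegral_prod_le_of_lintegral_pow_eq hE
          (fun e _ => (hF.comp (by fun_prop)).aemeasurable) hEdge)
    _ = ∫ p in Icc (0:ℝ) 1 ×ˢ Icc (0:ℝ) 1, |k p.1 p.2| ^ n := by
        rw [integral_eq_lintegral_of_nonneg_ae (.of_forall fun _ => by positivity)
          (by fun_prop)]
        simp only [F, ENNReal.ofReal_pow (abs_nonneg _)]

theorem homDensity_const {v : ℕ} (G : SimpleGraph (Fin v)) [DecidableRel G.Adj] (c : ℝ) :
    homDensity G (fun _ _ => c) = c ^ G.edgeFinset.card := by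
  simp [homDensity]

theorem setIntegral_unitSquare_const (c : ℝ) :
    ∫ _ in Icc (0:ℝ) 1 ×ˢ Icc (0:ℝ) 1, c = c := by
  rw [setIntegral_const, Measure.real, volume_unitSquare]
  simp

theorem homDensity_le_edge_moment_general
    (v : ℕ) (G : SimpleGraph (Fin v)) [DecidableRel G.Adj]
    (l : ℝ) (k : ℝ → ℝ → ℝ)
    (hkMeas : Measurable (Function.uncurry k))
    (hkBdd : ∀ x y, |k x y| ≤ l)
    (he : 1 ≤ G.edgeFinset.card)
    (hsign : (∀ x y, 0 ≤ k x y) ∨ Even G.edgeFinset.card) :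
    (homDensity G k
        ≤ ∫ p in (Icc (0:ℝ) 1) ×ˢ (Icc (0:ℝ) 1), (k p.1 p.2) ^ G.edgeFinset.card) ∧
    (∀ c : ℝ, homDensity G (fun _ _ => c)
        = ∫ p in (Icc (0:ℝ) 1) ×ˢ (Icc (0:ℝ) 1),
            ((fun _ _ => c) p.1 p.2 : ℝ) ^ G.edgeFinset.card) := by
  have habs_pow : ∀ x y, |k x y| ^ G.edgeFinset.card = k x y ^ G.edgeFinset.card := by
    rcases hsign with hk | heven
    · exact fun x y => by rw [abs_of_nonneg (hk x y)]
    · exact fun x y => heven.pow_abs _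
  refine ⟨?_, fun c => by rw [homDensity_const, setIntegral_unitSquare_const]⟩
  simpa only [habs_pow] using
    homDensity_le_setIntegral_abs_pow G hkMeas hkBdd (Finset.card_pos.mp he)

/-- **Lemma (Hölder bound for homomorphism densities).**
For a finite simple graph `H` with `e = e(H) ≥ 1` edges and a symmetric measurable
kernel `k` with `|k| ≤ l`, if `k ≥ 0` everywhere or `e` is even, then
`t(H,k) ≤ ∬_{[0,1]²} k(x,y)^e dx dy`, with equality for constant kernels. -/
theorem homDensity_le_edge_moment
    (v : ℕ) (G : SimpleGraph (Fin v)) [DecidableRel G.Adj]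
    (l : ℝ) (hl : 0 < l) (k : ℝ → ℝ → ℝ)
    (hkMeas : Measurable (Function.uncurry k))
    (hkSymm : ∀ x y, k x y = k y x)
    (hkBdd : ∀ x y, |k x y| ≤ l)
    (he : 1 ≤ G.edgeFinset.card)
    (hsign : (∀ x y, 0 ≤ k x y) ∨ Even G.edgeFinset.card) :
    (homDensity G k
        ≤ ∫ p in (Icc (0:ℝ) 1) ×ˢ (Icc (0:ℝ) 1), (k p.1 p.2) ^ G.edgeFinset.card) ∧
    (∀ c : ℝ, homDensity G (fun _ _ => c)
        = ∫ p in (Icc (0:ℝ) 1) ×ˢ (Icc (0:ℝ) 1),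
            ((fun _ _ => c) p.1 p.2 : ℝ) ^ G.edgeFinset.card) :=
  homDensity_le_edge_moment_general v G l k hkMeas hkBdd he hsign
end
end
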